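/- Let (X,Y) have a joint density p_{X,Y} on ℝ² with differentiable marginal densities p_X, p_Y, finite variances v_X = Var(X), v_Y = Var(Y), finite Fisher informations J(X), J(Y), and ψ-mixing coefficient ψ(X,Y) = sup_{x,y} |p_{X,Y}(x,y)/(p_X(x)p_Y(y)) − 1|. Then E[ρ_X(X) ρ_Y(Y)] − Cov(X,Y)/(v_X v_Y) ≥ −ψ(X,Y) √(J(X) J(Y) − (v_X v_Y)^{-1}). -/

import Mathlib

open MeasureTheory Real

/-- `ρ⁽¹⁾(x,y) = (∂p/∂x)(x,y) / p(x,y)`. -/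
noncomputable def score1 (p : ℝ × ℝ → ℝ) (z : ℝ × ℝ) : ℝ :=
  deriv (fun x => p (x, z.2)) z.1 / p z

/-- `ρ⁽²⁾(x,y) = (∂p/∂y)(x,y) / p(x,y)`. -/
noncomputable def score2 (p : ℝ × ℝ → ℝ) (z : ℝ × ℝ) : ℝ :=
  deriv (fun y => p (z.1, y)) z.2 / p z

/-- `J_XX = E[ρ⁽¹⁾(X,Y)²]`. -/
noncomputable def Jxx (p : ℝ × ℝ → ℝ) : ℝ := ∫ z, p z * (score1 p z) ^ 2

/-- `J_YY = E[ρ⁽²⁾(X,Y)²]`. -/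
noncomputable def Jyy (p : ℝ × ℝ → ℝ) : ℝ := ∫ z, p z * (score2 p z) ^ 2

/-- `J_XY = E[ρ⁽¹⁾(X,Y) ρ⁽²⁾(X,Y)]`. -/
noncomputable def Jxy (p : ℝ × ℝ → ℝ) : ℝ := ∫ z, p z * (score1 p z * score2 p z)

/-- Density of `W = X + Y`: `p_W(w) = ∫ p(x, w-x) dx`. -/
noncomputable def sumDensity (p : ℝ × ℝ → ℝ) (w : ℝ) : ℝ := ∫ x, p (x, w - x)

/-- Score of the sum: `ρ_W = p_W'/p_W`. -/
noncomputable def scoreW (p : ℝ × ℝ → ℝ) (w : ℝ) : ℝ :=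
  deriv (sumDensity p) w / sumDensity p w

/-- `J(X+Y) = E[ρ_W(W)²]`. -/
noncomputable def Jsum (p : ℝ × ℝ → ℝ) : ℝ := ∫ w, sumDensity p w * (scoreW p w) ^ 2

/-- `p` is a joint probability density on `ℝ²`. -/
def IsJointDensity (p : ℝ × ℝ → ℝ) : Prop :=
  Measurable p ∧ (∀ z, 0 ≤ p z) ∧ (∫ z, p z) = 1

/-- Marginal density of `X` for a joint density `p` on `ℝ²`. -/
noncomputable def margX (p : ℝ × ℝ → ℝ) (x : ℝ) : ℝ := ∫ y, p (x, y)

/-- Marginal density of `Y` for a joint density `p` on `ℝ²`. -/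
noncomputable def margY (p : ℝ × ℝ → ℝ) (y : ℝ) : ℝ := ∫ x, p (x, y)

/-- Score function `ρ = q'/q` of a density `q` on `ℝ`. -/
noncomputable def score (q : ℝ → ℝ) (x : ℝ) : ℝ := deriv q x / q x

/-- Marginal Fisher information `J = E[ρ(X)²] = ∫ q ρ²` of a density `q` on `ℝ`. -/
noncomputable def fisherInfo (q : ℝ → ℝ) : ℝ := ∫ x, q x * (score q x) ^ 2

/-- Mean of `X` under the joint density `p`. -/
noncomputable def meanX (p : ℝ × ℝ → ℝ) : ℝ := ∫ z, p z * z.1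

/-- Mean of `Y` under the joint density `p`. -/
noncomputable def meanY (p : ℝ × ℝ → ℝ) : ℝ := ∫ z, p z * z.2

/-- Variance of `X` under the joint density `p`. -/
noncomputable def varX (p : ℝ × ℝ → ℝ) : ℝ := ∫ z, p z * (z.1 - meanX p) ^ 2

/-- Variance of `Y` under the joint density `p`. -/
noncomputable def varY (p : ℝ × ℝ → ℝ) : ℝ := ∫ z, p z * (z.2 - meanY p) ^ 2

/-- Covariance of `X` and `Y` under the joint density `p`. -/
noncomputable def covXY (p : ℝ × ℝ → ℝ) : ℝ :=
  ∫ z, p z * ((z.1 - meanX p) * (z.2 - meanY p))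

/-- The `ψ`-mixing coefficient `ψ(X,Y) = sup_{x,y} |p_{X,Y}(x,y)/(p_X(x)p_Y(y)) − 1|`. -/
noncomputable def psiMix (p : ℝ × ℝ → ℝ) : ℝ :=
  ⨆ z : ℝ × ℝ, |p z / (margX p z.1 * margY p z.2) - 1|

/-!
Let `q(x,y) = p_X(x) p_Y(y)` and `F(x,y) = ρ_X(x) ρ_Y(y) - (x - μ_X)(y - μ_Y)/(v_X v_Y)`.
Under the product density `q` the coordinates are independent, so `∫ q F = 0` because
`E[ρ_X(X)] = 0`, and, since integration by parts gives `E[ρ_X(X)(X - μ_X)] = -1`,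
`∫ q F² = J(X) J(Y) - (v_X v_Y)⁻¹`. The definition of `ψ` says `|p - q| ≤ ψ q`, so by
Cauchy–Schwarz in `L²(q)`, `∫ p F = ∫ (p - q) F ≥ -ψ ∫ q |F| ≥ -ψ √(∫ q F²)`.
-/

section WeightedIntegrals

variable {α : Type*} [MeasurableSpace α] {μ : Measure α}

theorem integrable_mul_mul_of_integrable_mul_sq {w f g : α → ℝ} (hw : ∀ x, 0 ≤ w x)
    (hwm : AEStronglyMeasurable w μ) (hf : AEStronglyMeasurable f μ)
    (hg : AEStronglyMeasurable g μ) (hf2 : Integrable (fun x => w x * f x ^ 2) μ)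
    (hg2 : Integrable (fun x => w x * g x ^ 2) μ) :
    Integrable (fun x => w x * (f x * g x)) μ := by
  refine ((hf2.add hg2).div_const 2).mono' (hwm.mul (hf.mul hg)) (.of_forall fun x => ?_)
  have := mul_nonneg (hw x) (sq_nonneg (|f x| - |g x|))
  rw [norm_eq_abs, abs_mul, abs_mul, abs_of_nonneg (hw x), Pi.add_apply, ← sq_abs (f x),
    ← sq_abs (g x)]
  linarith

theorem integrable_mul_of_integrable_mul_sq {w f : α → ℝ} (hw : ∀ x, 0 ≤ w x)
    (hwi : Integrable w μ) (hf : AEStronglyMeasurable f μ)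
    (hf2 : Integrable (fun x => w x * f x ^ 2) μ) :
    Integrable (fun x => w x * f x) μ := by
  simpa using integrable_mul_mul_of_integrable_mul_sq (g := fun _ => 1) hw hwi.1 hf
    aestronglyMeasurable_const hf2 (by simpa using hwi)

theorem integrable_mul_of_ae_abs_sub_le {p q f : α → ℝ} {ψ : ℝ}
    (hqf : Integrable (fun x => q x * f x) μ) (hp : AEStronglyMeasurable p μ)
    (hf : AEStronglyMeasurable f μ) (hpq : ∀ᵐ x ∂μ, |p x - q x| ≤ ψ * q x) :
    Integrable (fun x => p x * f x) μ := by
  refine (hqf.norm.const_mul (|ψ| + 1)).mono' (hp.mul hf) ?_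
  filter_upwards [hpq] with x hx
  have hψq : |p x - q x| ≤ |ψ| * |q x| := hx.trans ((le_abs_self _).trans (abs_mul ψ _).le)
  have hpx : |p x| ≤ (|ψ| + 1) * |q x| := by
    linarith [abs_sub_abs_le_abs_sub (p x) (q x)]
  rw [norm_eq_abs, norm_eq_abs, abs_mul, abs_mul, ← mul_assoc]
  exact mul_le_mul_of_nonneg_right hpx (abs_nonneg _)

theorem integral_mul_abs_le_sqrt {w f : α → ℝ} (hw : ∀ x, 0 ≤ w x) (hw1 : ∫ x, w x ∂μ = 1)
    (hwf : Integrable (fun x => w x * |f x|) μ)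
    (hwf2 : Integrable (fun x => w x * f x ^ 2) μ) :
    ∫ x, w x * |f x| ∂μ ≤ √(∫ x, w x * f x ^ 2 ∂μ) := by
  set I := ∫ x, w x * |f x| ∂μ
  have hwi : Integrable w μ := .of_integral_ne_zero (by simp [hw1])
  have hvar : 0 ≤ ∫ x, (w x * f x ^ 2 - 2 * I * (w x * |f x|) + I ^ 2 * w x) ∂μ := by
    refine integral_nonneg fun x => ?_
    have := mul_nonneg (hw x) (sq_nonneg (|f x| - I))
    rw [Pi.zero_apply, ← sq_abs (f x)]
    linarith
  have hsub : Integrable (fun x => w x * f x ^ 2 - 2 * I * (w x * |f x|)) μ :=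
    hwf2.sub (hwf.const_mul _)
  rw [integral_add hsub (hwi.const_mul _), integral_sub hwf2 (hwf.const_mul _),
    integral_const_mul, integral_const_mul, hw1] at hvar
  exact Real.le_sqrt_of_sq_le (by linarith)

theorem neg_mul_sqrt_le_integral_mul {p q F : α → ℝ} {ψ : ℝ} (hq : ∀ x, 0 ≤ q x)
    (hq1 : ∫ x, q x ∂μ = 1) (hp : AEStronglyMeasurable p μ) (hF : AEStronglyMeasurable F μ)
    (hqF2 : Integrable (fun x => q x * F x ^ 2) μ) (hqF : ∫ x, q x * F x ∂μ = 0)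
    (hpq : ∀ᵐ x ∂μ, |p x - q x| ≤ ψ * q x) (hψ : 0 ≤ ψ) :
    -(ψ * √(∫ x, q x * F x ^ 2 ∂μ)) ≤ ∫ x, p x * F x ∂μ := by
  have hqi : Integrable q μ := .of_integral_ne_zero (by simp [hq1])
  have hqF_int := integrable_mul_of_integrable_mul_sq hq hqi hF hqF2
  have hpF_int := integrable_mul_of_ae_abs_sub_le hqF_int hp hF hpq
  have hqabs : Integrable (fun x => q x * |F x|) μ :=
    integrable_mul_of_integrable_mul_sq hq hqi hF.norm (by simpa using hqF2)
  calc -(ψ * √(∫ x, q x * F x ^ 2 ∂μ))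
      ≤ -(ψ * ∫ x, q x * |F x| ∂μ) :=
        neg_le_neg (mul_le_mul_of_nonneg_left (integral_mul_abs_le_sqrt hq hq1 hqabs hqF2) hψ)
    _ = ∫ x, -(ψ * (q x * |F x|)) ∂μ := by rw [integral_neg, integral_const_mul]
    _ ≤ ∫ x, (p x * F x - q x * F x) ∂μ := by
        refine integral_mono_ae (hqabs.const_mul ψ).neg (hpF_int.sub hqF_int) ?_
        filter_upwards [hpq] with x hx
        have : |p x - q x| * |F x| ≤ ψ * q x * |F x| :=
          mul_le_mul_of_nonneg_right hx (abs_nonneg _)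
        rw [← sub_mul]
        nlinarith [neg_abs_le ((p x - q x) * F x), abs_mul (p x - q x) (F x)]
    _ = ∫ x, p x * F x ∂μ := by rw [integral_sub hpF_int hqF_int, hqF, sub_zero]

end WeightedIntegrals

theorem deriv_eq_mul_score {m : ℝ → ℝ} (hm : ∀ x, 0 ≤ m x) (x : ℝ) :
    deriv m x = m x * score m x := by
  rcases (hm x).eq_or_lt with h | h
  · have hmin : IsLocalMin m x := .of_forall fun y => h ▸ hm y
    rw [hmin.deriv_eq_zero, ← h, zero_mul]
  · rw [score, mul_div_cancel₀ _ h.ne']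

structure IsRegularDensity (m : ℝ → ℝ) (a : ℝ) : Prop where
  nonneg : ∀ x, 0 ≤ m x
  differentiable : Differentiable ℝ m
  integral_eq_one : ∫ x, m x = 1
  integrable_mul_score_sq : Integrable fun x => m x * score m x ^ 2
  integrable_mul_sub_sq : Integrable fun x => m x * (x - a) ^ 2
  integral_mul_sub : ∫ x, m x * (x - a) = 0

namespace IsRegularDensity

section OneDensity

variable {m : ℝ → ℝ} {a : ℝ}

theorem integrable (h : IsRegularDensity m a) : Integrable m :=
  .of_integral_ne_zero (by simp [h.integral_eq_one])

theorem measurable (h : IsRegularDensity m a) : Measurable m :=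
  h.differentiable.continuous.measurable

theorem measurable_score (h : IsRegularDensity m a) : Measurable (score m) :=
  (measurable_deriv m).div h.measurable

theorem integrable_mul_score (h : IsRegularDensity m a) :
    Integrable fun x => m x * score m x :=
  integrable_mul_of_integrable_mul_sq h.nonneg h.integrable
    h.measurable_score.aestronglyMeasurable h.integrable_mul_score_sq

theorem integrable_mul_sub (h : IsRegularDensity m a) : Integrable fun x => m x * (x - a) :=
  integrable_mul_of_integrable_mul_sq h.nonneg h.integrable (by fun_prop)
    h.integrable_mul_sub_sq

theorem integrable_mul_score_mul_sub (h : IsRegularDensity m a) :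
    Integrable fun x => m x * (score m x * (x - a)) :=
  integrable_mul_mul_of_integrable_mul_sq h.nonneg h.measurable.aestronglyMeasurable
    h.measurable_score.aestronglyMeasurable (by fun_prop) h.integrable_mul_score_sq
    h.integrable_mul_sub_sq

theorem integral_mul_score (h : IsRegularDensity m a) : ∫ x, m x * score m x = 0 := by
  simp_rw [← deriv_eq_mul_score h.nonneg]
  refine integral_eq_zero_of_hasDerivAt_of_integrable (fun x => (h.differentiable x).hasDerivAt)
    ?_ h.integrable
  simpa only [← deriv_eq_mul_score h.nonneg] using h.integrable_mul_score

/-- Integration by parts: `∫ m' (x - a) = -∫ m`. -/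
theorem integral_mul_score_mul_sub (h : IsRegularDensity m a) :
    ∫ x, m x * (score m x * (x - a)) = -1 := by
  have hderiv (x : ℝ) : HasDerivAt (fun x => m x * (x - a))
      (m x * (score m x * (x - a)) + m x) x := by
    refine ((h.differentiable x).hasDerivAt.mul ((hasDerivAt_id x).sub_const a)).congr_deriv ?_
    rw [deriv_eq_mul_score h.nonneg, id]
    ring
  have h0 := integral_eq_zero_of_hasDerivAt_of_integrable hderiv
    (h.integrable_mul_score_mul_sub.add h.integrable) h.integrable_mul_sub
  rw [integral_add h.integrable_mul_score_mul_sub h.integrable, h.integral_eq_one] at h0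
  linarith

end OneDensity

end IsRegularDensity

/-- In `L²(m₁ ⊗ m₂)`, the projection of `score m₁ x * score m₂ y` onto `(x - a) * (y - b)` has
coefficient `1 / v` when `v` is the product of the two variances: this is the residual. -/
noncomputable def scoreProductResidual (m₁ m₂ : ℝ → ℝ) (a b v : ℝ) (z : ℝ × ℝ) : ℝ :=
  score m₁ z.1 * score m₂ z.2 - (z.1 - a) * (z.2 - b) / v

theorem tensor_mul_scoreProductResidual_sq (m₁ m₂ : ℝ → ℝ) (a b v : ℝ) (z : ℝ × ℝ) :
    m₁ z.1 * m₂ z.2 * scoreProductResidual m₁ m₂ a b v z ^ 2 =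
      m₁ z.1 * score m₁ z.1 ^ 2 * (m₂ z.2 * score m₂ z.2 ^ 2)
        - 2 / v * (m₁ z.1 * (score m₁ z.1 * (z.1 - a)) * (m₂ z.2 * (score m₂ z.2 * (z.2 - b))))
        + (v ^ 2)⁻¹ * (m₁ z.1 * (z.1 - a) ^ 2 * (m₂ z.2 * (z.2 - b) ^ 2)) := by
  unfold scoreProductResidual
  ring

namespace IsRegularDensity

section TwoDensities

variable {m₁ m₂ : ℝ → ℝ} {a b : ℝ}

theorem integral_tensor_eq_one (h₁ : IsRegularDensity m₁ a) (h₂ : IsRegularDensity m₂ b) :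
    ∫ z : ℝ × ℝ, m₁ z.1 * m₂ z.2 = 1 := by
  rw [Measure.volume_eq_prod, integral_prod_mul m₁ m₂, h₁.integral_eq_one, h₂.integral_eq_one,
    mul_one]

theorem measurable_scoreProductResidual (h₁ : IsRegularDensity m₁ a)
    (h₂ : IsRegularDensity m₂ b) (v : ℝ) : Measurable (scoreProductResidual m₁ m₂ a b v) :=
  ((h₁.measurable_score.comp measurable_fst).mul (h₂.measurable_score.comp measurable_snd)).sub
    (by fun_prop)

theorem integral_tensor_mul_scoreProductResidual (h₁ : IsRegularDensity m₁ a)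
    (h₂ : IsRegularDensity m₂ b) (v : ℝ) :
    ∫ z : ℝ × ℝ, m₁ z.1 * m₂ z.2 * scoreProductResidual m₁ m₂ a b v z = 0 := by
  have hexpand (z : ℝ × ℝ) : m₁ z.1 * m₂ z.2 * scoreProductResidual m₁ m₂ a b v z =
      m₁ z.1 * score m₁ z.1 * (m₂ z.2 * score m₂ z.2)
        - m₁ z.1 * (z.1 - a) * (m₂ z.2 * (z.2 - b)) / v := by
    unfold scoreProductResidual
    ring
  simp_rw [hexpand]
  rw [Measure.volume_eq_prod,
    integral_sub (h₁.integrable_mul_score.mul_prod h₂.integrable_mul_score)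
      ((h₁.integrable_mul_sub.mul_prod h₂.integrable_mul_sub).div_const v), integral_div,
    integral_prod_mul (fun x => m₁ x * score m₁ x) (fun y => m₂ y * score m₂ y),
    integral_prod_mul (fun x => m₁ x * (x - a)) (fun y => m₂ y * (y - b)),
    h₁.integral_mul_score, h₁.integral_mul_sub, zero_mul, zero_mul, zero_div, sub_zero]

theorem integrable_tensor_mul_scoreProductResidual_sq (h₁ : IsRegularDensity m₁ a)
    (h₂ : IsRegularDensity m₂ b) (v : ℝ) :
    Integrable fun z : ℝ × ℝ => m₁ z.1 * m₂ z.2 * scoreProductResidual m₁ m₂ a b v z ^ 2 := by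
  simp_rw [tensor_mul_scoreProductResidual_sq]
  exact ((h₁.integrable_mul_score_sq.mul_prod h₂.integrable_mul_score_sq).sub
    ((h₁.integrable_mul_score_mul_sub.mul_prod h₂.integrable_mul_score_mul_sub).const_mul _)).add
    ((h₁.integrable_mul_sub_sq.mul_prod h₂.integrable_mul_sub_sq).const_mul _)

theorem integral_tensor_mul_scoreProductResidual_sq (h₁ : IsRegularDensity m₁ a)
    (h₂ : IsRegularDensity m₂ b) {v₁ v₂ : ℝ} (hv₁ : ∫ x, m₁ x * (x - a) ^ 2 = v₁)
    (hv₂ : ∫ y, m₂ y * (y - b) ^ 2 = v₂) :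
    ∫ z : ℝ × ℝ, m₁ z.1 * m₂ z.2 * scoreProductResidual m₁ m₂ a b (v₁ * v₂) z ^ 2 =
      fisherInfo m₁ * fisherInfo m₂ - (v₁ * v₂)⁻¹ := by
  have hJ := h₁.integrable_mul_score_sq.mul_prod h₂.integrable_mul_score_sq
  have hS := h₁.integrable_mul_score_mul_sub.mul_prod h₂.integrable_mul_score_mul_sub
  have hV := h₁.integrable_mul_sub_sq.mul_prod h₂.integrable_mul_sub_sq
  have hJS : Integrable (fun z : ℝ × ℝ =>
      m₁ z.1 * score m₁ z.1 ^ 2 * (m₂ z.2 * score m₂ z.2 ^ 2) - 2 / (v₁ * v₂) *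
        (m₁ z.1 * (score m₁ z.1 * (z.1 - a)) * (m₂ z.2 * (score m₂ z.2 * (z.2 - b)))))
      (volume.prod volume) := hJ.sub (hS.const_mul _)
  simp_rw [tensor_mul_scoreProductResidual_sq]
  rw [Measure.volume_eq_prod, integral_add hJS (hV.const_mul _),
    integral_sub hJ (hS.const_mul _), integral_const_mul, integral_const_mul,
    integral_prod_mul (fun x => m₁ x * score m₁ x ^ 2) (fun y => m₂ y * score m₂ y ^ 2),
    integral_prod_mul (fun x => m₁ x * (score m₁ x * (x - a)))
      (fun y => m₂ y * (score m₂ y * (y - b))),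
    integral_prod_mul (fun x => m₁ x * (x - a) ^ 2) (fun y => m₂ y * (y - b) ^ 2),
    h₁.integral_mul_score_mul_sub, h₂.integral_mul_score_mul_sub, hv₁, hv₂, fisherInfo,
    fisherInfo]
  rcases eq_or_ne (v₁ * v₂) 0 with hv | hv
  · simp [hv]
  · field_simp
    ring

end TwoDensities

end IsRegularDensity

section Marginals

variable {p : ℝ × ℝ → ℝ}

theorem IsJointDensity.integrable (hp : IsJointDensity p) : Integrable p :=
  .of_integral_ne_zero (by simp [hp.2.2])

theorem IsJointDensity.comp_swap (hp : IsJointDensity p) : IsJointDensity (p ∘ Prod.swap) := by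
  refine ⟨hp.1.comp measurable_swap, fun z => hp.2.1 z.swap, ?_⟩
  rw [Measure.volume_eq_prod, ← hp.2.2, Measure.volume_eq_prod]
  exact integral_prod_swap p

theorem measurable_margX (hp : Measurable p) : Measurable (margX p) :=
  hp.stronglyMeasurable.integral_prod_right'.measurable

theorem margX_nonneg (hp : ∀ z, 0 ≤ p z) (x : ℝ) : 0 ≤ margX p x :=
  integral_nonneg fun _ => hp _

theorem margY_nonneg (hp : ∀ z, 0 ≤ p z) (y : ℝ) : 0 ≤ margY p y :=
  integral_nonneg fun _ => hp _

variable {g : ℝ → ℝ}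

theorem integrable_margX_mul (hg : Integrable fun z : ℝ × ℝ => p z * g z.1) :
    Integrable fun x => margX p x * g x :=
  hg.integral_prod_left.congr (.of_forall fun x => integral_mul_const (g x) _)

theorem integral_margX_mul (hg : Integrable fun z : ℝ × ℝ => p z * g z.1) :
    ∫ x, margX p x * g x = ∫ z : ℝ × ℝ, p z * g z.1 := by
  rw [Measure.volume_eq_prod, integral_prod _ hg]
  exact integral_congr_ae (.of_forall fun x => (integral_mul_const (g x) _).symm)

-- `margY p` is definitionally `margX (p ∘ Prod.swap)`.
theorem integrable_margY_mul (hg : Integrable fun z : ℝ × ℝ => p z * g z.2) :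
    Integrable fun y => margY p y * g y :=
  integrable_margX_mul (p := p ∘ Prod.swap) hg.swap

theorem integral_margY_mul (hg : Integrable fun z : ℝ × ℝ => p z * g z.2) :
    ∫ y, margY p y * g y = ∫ z : ℝ × ℝ, p z * g z.2 :=
  (integral_margX_mul (p := p ∘ Prod.swap) hg.swap).trans
    (integral_prod_swap fun z : ℝ × ℝ => p z * g z.2)

theorem ae_eq_zero_of_margX_eq_zero (hp : IsJointDensity p) :
    ∀ᵐ z : ℝ × ℝ, margX p z.1 = 0 → p z = 0 := by
  set g : ℝ → ℝ := {x | margX p x = 0}.indicator 1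
  have hS : MeasurableSet {x | margX p x = 0} :=
    measurable_margX hp.1 (measurableSet_singleton 0)
  have hg_nonneg (x : ℝ) : 0 ≤ g x := Set.indicator_nonneg (fun _ _ => zero_le_one) x
  have hpg : Integrable fun z : ℝ × ℝ => p z * g z.1 := by
    refine hp.integrable.mono'
      (hp.1.mul ((measurable_const.indicator hS).comp measurable_fst)).aestronglyMeasurable
      (.of_forall fun z => ?_)
    rw [norm_mul, Real.norm_of_nonneg (hp.2.1 z), Real.norm_of_nonneg (hg_nonneg _)]
    exact mul_le_of_le_one_right (hp.2.1 z) (Set.indicator_le_self' (fun _ _ => zero_le_one) _)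
  have hmarg (x : ℝ) : margX p x * g x = 0 := by
    by_cases hx : margX p x = 0 <;> simp [g, hx]
  have h0 : ∫ z : ℝ × ℝ, p z * g z.1 = 0 := by
    rw [← integral_margX_mul hpg]
    simp [hmarg]
  have hpg_nonneg (z : ℝ × ℝ) : 0 ≤ p z * g z.1 := mul_nonneg (hp.2.1 z) (hg_nonneg _)
  filter_upwards [(integral_eq_zero_iff_of_nonneg hpg_nonneg hpg).1 h0] with z hz hz0
  simpa [g, hz0] using hz

theorem ae_eq_zero_of_margY_eq_zero (hp : IsJointDensity p) :
    ∀ᵐ z : ℝ × ℝ, margY p z.2 = 0 → p z = 0 :=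
  Measure.measurePreserving_swap.quasiMeasurePreserving.ae
    (ae_eq_zero_of_margX_eq_zero hp.comp_swap)

/-- Where `p_X(x) p_Y(y) = 0` the ratio in `psiMix` is the junk value `p / 0 = 0`, but there
`p = 0` almost everywhere. -/
theorem ae_abs_sub_le_psiMix_mul (hp : IsJointDensity p)
    (hpsi : BddAbove (Set.range fun z : ℝ × ℝ => |p z / (margX p z.1 * margY p z.2) - 1|)) :
    ∀ᵐ z : ℝ × ℝ,
      |p z - margX p z.1 * margY p z.2| ≤ psiMix p * (margX p z.1 * margY p z.2) := by
  filter_upwards [ae_eq_zero_of_margX_eq_zero hp, ae_eq_zero_of_margY_eq_zero hp] with z hX hY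
  set q := margX p z.1 * margY p z.2
  rcases (show 0 ≤ q from mul_nonneg (margX_nonneg hp.2.1 _) (margY_nonneg hp.2.1 _)).eq_or_lt
    with hq | hq
  · rcases mul_eq_zero.1 hq.symm with h | h
    · simp [hX h, ← hq]
    · simp [hY h, ← hq]
  · calc |p z - q| = |(p z / q - 1) * q| := by rw [sub_mul, div_mul_cancel₀ _ hq.ne', one_mul]
      _ = |p z / q - 1| * q := by rw [abs_mul, abs_of_pos hq]
      _ ≤ psiMix p * q := mul_le_mul_of_nonneg_right (le_ciSup hpsi z) hq.le

theorem integrable_mul_score_mul_score (hp : IsJointDensity p)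
    (hpsi : BddAbove (Set.range fun z : ℝ × ℝ => |p z / (margX p z.1 * margY p z.2) - 1|))
    {a b : ℝ} (hX : IsRegularDensity (margX p) a) (hY : IsRegularDensity (margY p) b) :
    Integrable fun z : ℝ × ℝ => p z * (score (margX p) z.1 * score (margY p) z.2) :=
  integrable_mul_of_ae_abs_sub_le
    ((hX.integrable_mul_score.mul_prod hY.integrable_mul_score).congr
      (.of_forall fun z => by ring))
    hp.integrable.aestronglyMeasurable
    ((hX.measurable_score.comp measurable_fst).mul
      (hY.measurable_score.comp measurable_snd)).aestronglyMeasurable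
    (ae_abs_sub_le_psiMix_mul hp hpsi)

theorem isRegularDensity_margX (hp : IsJointDensity p) (hd : Differentiable ℝ (margX p))
    (hJ : Integrable fun x => margX p x * score (margX p) x ^ 2)
    (hv : Integrable fun z : ℝ × ℝ => p z * (z.1 - meanX p) ^ 2) :
    IsRegularDensity (margX p) (meanX p) where
  nonneg := margX_nonneg hp.2.1
  differentiable := hd
  integral_eq_one := by
    have h := integral_margX_mul (g := fun _ => 1) (by simpa using hp.integrable)
    simp only [mul_one] at h
    exact h.trans hp.2.2
  integrable_mul_score_sq := hJ
  integrable_mul_sub_sq := integrable_margX_mul hv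
  integral_mul_sub := by
    have hc : Integrable fun z : ℝ × ℝ => p z * (z.1 - meanX p) :=
      integrable_mul_of_integrable_mul_sq hp.2.1 hp.integrable (by fun_prop) hv
    have hfst : Integrable fun z : ℝ × ℝ => p z * z.1 :=
      (hc.add (hp.integrable.mul_const (meanX p))).congr
        (.of_forall fun z => by simp only [Pi.add_apply]; ring)
    rw [integral_margX_mul hc]
    simp_rw [mul_sub]
    rw [integral_sub hfst (hp.integrable.mul_const _), integral_mul_const, hp.2.2, one_mul]
    exact sub_self _

theorem isRegularDensity_margY (hp : IsJointDensity p) (hd : Differentiable ℝ (margY p))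
    (hJ : Integrable fun y => margY p y * score (margY p) y ^ 2)
    (hv : Integrable fun z : ℝ × ℝ => p z * (z.2 - meanY p) ^ 2) :
    IsRegularDensity (margY p) (meanY p) := by
  have hmean : meanY p = meanX (p ∘ Prod.swap) :=
    (integral_prod_swap fun z : ℝ × ℝ => p z * z.2).symm
  rw [hmean] at hv ⊢
  exact isRegularDensity_margX hp.comp_swap hd hJ hv.swap

end Marginals

theorem score_product_psi_mixing_bound_general
    (p : ℝ × ℝ → ℝ) (hp : IsJointDensity p)
    (hdX : Differentiable ℝ (margX p)) (hdY : Differentiable ℝ (margY p))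
    (hvX : Integrable (fun z : ℝ × ℝ => p z * (z.1 - meanX p) ^ 2))
    (hvY : Integrable (fun z : ℝ × ℝ => p z * (z.2 - meanY p) ^ 2))
    (hJX : Integrable (fun x => margX p x * (score (margX p) x) ^ 2))
    (hJY : Integrable (fun y => margY p y * (score (margY p) y) ^ 2))
    (hpsi : BddAbove (Set.range fun z : ℝ × ℝ => |p z / (margX p z.1 * margY p z.2) - 1|)) :
    -(psiMix p * Real.sqrt (fisherInfo (margX p) * fisherInfo (margY p)
          - (varX p * varY p)⁻¹))
      ≤ (∫ z, p z * (score (margX p) z.1 * score (margY p) z.2))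
          - covXY p / (varX p * varY p) := by
  have hX := isRegularDensity_margX hp hdX hJX hvX
  have hY := isRegularDensity_margY hp hdY hJY hvY
  have hpq := ae_abs_sub_le_psiMix_mul hp hpsi
  have hpm := hp.integrable.aestronglyMeasurable
  have hscore := integrable_mul_score_mul_score hp hpsi hX hY
  have hcov : Integrable fun z : ℝ × ℝ => p z * ((z.1 - meanX p) * (z.2 - meanY p)) :=
    integrable_mul_mul_of_integrable_mul_sq hp.2.1 hpm (by fun_prop) (by fun_prop) hvX hvY
  have hsplit : ∫ z, p z * scoreProductResidual (margX p) (margY p) (meanX p) (meanY p)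
      (varX p * varY p) z =
      (∫ z, p z * (score (margX p) z.1 * score (margY p) z.2)) - covXY p / (varX p * varY p) := by
    rw [covXY, ← integral_div, ← integral_sub hscore (hcov.div_const _)]
    congr 1 with z
    unfold scoreProductResidual
    ring
  have key := neg_mul_sqrt_le_integral_mul (fun z => mul_nonneg (hX.nonneg z.1) (hY.nonneg z.2))
    (hX.integral_tensor_eq_one hY) hpm
    (hX.measurable_scoreProductResidual hY (varX p * varY p)).aestronglyMeasurable
    (hX.integrable_tensor_mul_scoreProductResidual_sq hY _)
    (hX.integral_tensor_mul_scoreProductResidual hY _) hpq (Real.iSup_nonneg fun _ => abs_nonneg _)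
  rwa [hX.integral_tensor_mul_scoreProductResidual_sq hY (v₁ := varX p) (v₂ := varY p)
    (integral_margX_mul hvX) (integral_margY_mul hvY), hsplit] at key

/-- For `(X,Y)` with joint density `p`, differentiable marginals, finite variances, finite
Fisher informations and `ψ`-mixing coefficient `ψ(X,Y)`,
`E[ρ_X(X) ρ_Y(Y)] − Cov(X,Y)/(v_X v_Y) ≥ −ψ(X,Y) √(J(X) J(Y) − (v_X v_Y)⁻¹)`. -/
theorem score_product_psi_mixing_bound
    (p : ℝ × ℝ → ℝ) (hp : IsJointDensity p)
    (hdX : Differentiable ℝ (margX p)) (hdY : Differentiable ℝ (margY p))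
    (hmX : Integrable (fun z : ℝ × ℝ => p z * z.1))
    (hmY : Integrable (fun z : ℝ × ℝ => p z * z.2))
    (hvX : Integrable (fun z : ℝ × ℝ => p z * (z.1 - meanX p) ^ 2))
    (hvY : Integrable (fun z : ℝ × ℝ => p z * (z.2 - meanY p) ^ 2))
    (hJX : Integrable (fun x => margX p x * (score (margX p) x) ^ 2))
    (hJY : Integrable (fun y => margY p y * (score (margY p) y) ^ 2))
    (hpsi : BddAbove (Set.range fun z : ℝ × ℝ => |p z / (margX p z.1 * margY p z.2) - 1|)) :
    -(psiMix p * Real.sqrt (fisherInfo (margX p) * fisherInfo (margY p)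
          - (varX p * varY p)⁻¹))
      ≤ (∫ z, p z * (score (margX p) z.1 * score (margY p) z.2))
          - covXY p / (varX p * varY p) :=
  score_product_psi_mixing_bound_general p hp hdX hdY hvX hvY hJX hJY hpsi
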